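/- On ℝ³ with coordinates (x,z,q), the vector fields e'(x,z,q) = (0,0,1), f'(x,z,q) = (−(2qx+1), −2q, q²), h'(x,z,q) = (−x, −1, q) (i.e. e' = ∂_q, f' = q²∂_q − 2q∂_z − (2qx+1)∂_x, h' = q∂_q − ∂_z − x∂_x) satisfy [e',f'] = 2·h', [e',h'] = e', [f',h'] = −f' at every point, and the 1-forms s₄ = ω₄ + q²ω₅, s₅ = ω₅, s₆ = ω₃ − 2q ω₅, where ω₃ = −dz, ω₄ = dq + q dz, ω₅ = −(dx − x dz), form pointwise the dual basis to (e', f', h'): for every a ∈ ℝ³, s₄(a)(e'(a)) = 1, s₅(a)(f'(a)) = 1, s₆(a)(h'(a)) = 1, and all other pairings vanish. (This is the second copy of sl₂.) -/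
import Mathlib


/-!
STATEMENT 11: on ℝ³ with coordinates (x,z,q), the vector fields
e' = ∂_q, f' = q²∂_q − 2q∂_z − (2qx+1)∂_x, h' = q∂_q − ∂_z − x∂_x satisfy
[e',f'] = 2h', [e',h'] = e', [f',h'] = −f', and the 1-forms
s₄ = ω₄ + q²ω₅, s₅ = ω₅, s₆ = ω₃ − 2qω₅ (with ω₃ = −dz, ω₄ = dq + q dz,
ω₅ = −(dx − x dz)) form pointwise the dual basis to (e', f', h').
-/

noncomputable section

/-- coordinate differentials dx, dz, dq on ℝ³ with coordinates (x,z,q) -/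
def dc (i : Fin 3) : (Fin 3 → ℝ) →L[ℝ] ℝ := ContinuousLinearMap.proj i

/-- e' = ∂_q -/
def eVF : (Fin 3 → ℝ) → (Fin 3 → ℝ) := fun _ => ![0, 0, 1]

/-- f' = q²∂_q − 2q∂_z − (2qx+1)∂_x -/
def fVF : (Fin 3 → ℝ) → (Fin 3 → ℝ) := fun a => ![-(2 * a 2 * a 0 + 1), -2 * a 2, (a 2)^2]

/-- h' = q∂_q − ∂_z − x∂_x -/
def hVF : (Fin 3 → ℝ) → (Fin 3 → ℝ) := fun a => ![-(a 0), -1, a 2]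

/-- ω₃ = −dz -/
def ω₃ : (Fin 3 → ℝ) → ((Fin 3 → ℝ) →L[ℝ] ℝ) := fun _ => -dc 1

/-- ω₄ = dq + q dz -/
def ω₄ : (Fin 3 → ℝ) → ((Fin 3 → ℝ) →L[ℝ] ℝ) := fun a => dc 2 + a 2 • dc 1

/-- ω₅ = −(dx − x dz) -/
def ω₅ : (Fin 3 → ℝ) → ((Fin 3 → ℝ) →L[ℝ] ℝ) := fun a => -(dc 0 - a 0 • dc 1)

/-- s₄ = ω₄ + q²ω₅ -/
def s₄ : (Fin 3 → ℝ) → ((Fin 3 → ℝ) →L[ℝ] ℝ) := fun a => ω₄ a + (a 2)^2 • ω₅ a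

/-- s₅ = ω₅ -/
def s₅ : (Fin 3 → ℝ) → ((Fin 3 → ℝ) →L[ℝ] ℝ) := ω₅

/-- s₆ = ω₃ − 2q ω₅ -/
def s₆ : (Fin 3 → ℝ) → ((Fin 3 → ℝ) →L[ℝ] ℝ) := fun a => ω₃ a - (2 * a 2) • ω₅ a

private lemma hproj (i : Fin 3) (a : Fin 3 → ℝ) :
    HasFDerivAt (fun f : Fin 3 → ℝ => f i) (dc i) a :=
  hasFDerivAt_apply (𝕜 := ℝ) i a

/-- derivative of fVF -/
private def Df (a : Fin 3 → ℝ) : (Fin 3 → ℝ) →L[ℝ] (Fin 3 → ℝ) :=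
  ContinuousLinearMap.pi
    ![-((2 * a 2) • dc 0 + (2 * a 0) • dc 2), (-2 : ℝ) • dc 2, (2 * a 2) • dc 2]

/-- derivative of hVF -/
private def Dh : (Fin 3 → ℝ) →L[ℝ] (Fin 3 → ℝ) :=
  ContinuousLinearMap.pi ![-dc 0, 0, dc 2]

private lemma hasF (a : Fin 3 → ℝ) : HasFDerivAt fVF (Df a) a := by
  rw [hasFDerivAt_pi']
  intro i
  rw [Df, ContinuousLinearMap.proj_pi]
  fin_cases i
  · exact ((((hproj 2 a).const_mul 2).mul (hproj 0 a)).add_const 1).neg.congr_fderiv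
      (by ext v; simp [dc]; ring)
  · exact ((hproj 2 a).const_mul (-2)).congr_fderiv (by ext v; simp [dc])
  · have h : HasFDerivAt (fun y : Fin 3 → ℝ => y 2 * y 2) ((2 * a 2) • dc 2) a :=
      ((hproj 2 a).mul (hproj 2 a)).congr_fderiv (by ext v; simp [dc]; ring)
    exact h.congr_of_eventuallyEq (Filter.Eventually.of_forall fun y => by simp [fVF, pow_two])

private lemma hasH (a : Fin 3 → ℝ) : HasFDerivAt hVF Dh a := by
  rw [hasFDerivAt_pi']
  intro i
  rw [Dh, ContinuousLinearMap.proj_pi]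
  fin_cases i
  · exact (hproj 0 a).neg.congr_fderiv (by ext v; simp [dc])
  · exact (hasFDerivAt_const _ _)
  · exact hproj 2 a

private lemma hasE (a : Fin 3 → ℝ) : HasFDerivAt (𝕜 := ℝ) eVF 0 a := hasFDerivAt_const (𝕜 := ℝ) _ _

theorem second_sl2_copy :
    (∀ a : Fin 3 → ℝ, VectorField.lieBracket ℝ eVF fVF a = (2 : ℝ) • hVF a) ∧
    (∀ a : Fin 3 → ℝ, VectorField.lieBracket ℝ eVF hVF a = eVF a) ∧
    (∀ a : Fin 3 → ℝ, VectorField.lieBracket ℝ fVF hVF a = -fVF a) ∧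
    (∀ a : Fin 3 → ℝ,
      s₄ a (eVF a) = 1 ∧ s₄ a (fVF a) = 0 ∧ s₄ a (hVF a) = 0 ∧
      s₅ a (eVF a) = 0 ∧ s₅ a (fVF a) = 1 ∧ s₅ a (hVF a) = 0 ∧
      s₆ a (eVF a) = 0 ∧ s₆ a (fVF a) = 0 ∧ s₆ a (hVF a) = 1) := by
  refine ⟨fun a => ?_, fun a => ?_, fun a => ?_, fun a => ?_⟩
  · show fderiv ℝ fVF a (eVF a) - fderiv ℝ eVF a (fVF a) = _
    rw [(hasF a).fderiv, (hasE a).fderiv]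
    funext i
    fin_cases i <;>
      simp [Df, eVF, hVF, dc, ContinuousLinearMap.pi_apply]
  · show fderiv ℝ hVF a (eVF a) - fderiv ℝ eVF a (hVF a) = _
    rw [(hasH a).fderiv, (hasE a).fderiv]
    funext i
    fin_cases i <;>
      simp [Dh, eVF, dc, ContinuousLinearMap.pi_apply]
  · show fderiv ℝ hVF a (fVF a) - fderiv ℝ fVF a (hVF a) = _
    rw [(hasH a).fderiv, (hasF a).fderiv]
    funext i
    fin_cases i <;>
      simp [Df, Dh, fVF, hVF, dc, ContinuousLinearMap.pi_apply] <;> ring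
  · refine ⟨?_, ?_, ?_, ?_, ?_, ?_, ?_, ?_, ?_⟩ <;>
      simp [s₄, s₅, s₆, ω₃, ω₄, ω₅, eVF, fVF, hVF, dc] <;> ring

end
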